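/- arXiv:1709.02849 — 2 statements merged into one kernel-verified Lean document; each statement's English description precedes it below -/
import Mathlib

section
/- Let G be an LCA group, H a closed subgroup with countable annihilator Λ, μ a finite regular Borel measure on Γ, α ∈ (0,∞), and x ∈ G. If f ∈ L^α(μ) satisfies f(γ + λ) = ⟨λ, x⟩ f(γ) for μ-almost all γ and every λ ∈ Λ, then f belongs to the closure C_α P(x̃) of the trigonometric polynomials with frequencies in x + H. -/
open MeasureTheory Set Pointwise Topology
open scoped ENNReal NNReal

/-- One step of Lusin's theorem: a measurable function agrees within `r` with a function
continuous on a compact set of almost full measure. -/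
lemma lusin_step {Γ : Type*} [TopologicalSpace Γ] [T2Space Γ]
    [MeasurableSpace Γ] [OpensMeasurableSpace Γ]
    (μ : Measure Γ) [IsFiniteMeasure μ] [μ.InnerRegularCompactLTTop]
    {g : Γ → ℂ} (hg : Measurable g) {r : ℝ} (hr : 0 < r)
    {β : ℝ≥0∞} (hβ0 : β ≠ 0) (hβtop : β ≠ ∞) :
    ∃ K, IsCompact K ∧ μ Kᶜ ≤ β ∧
      ∃ s : Γ → ℂ, ContinuousOn s K ∧ ∀ γ ∈ K, ‖g γ - s γ‖ ≤ r := by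
  classical
  set u : ℕ → ℂ := TopologicalSpace.denseSeq ℂ with hu
  set B : ℕ → Set ℂ := fun i => Metric.ball (u i) r with hB
  have hBcover : (⋃ i, B i) = univ := by
    ext z
    simp only [mem_iUnion, mem_univ, iff_true]
    obtain ⟨i, hi⟩ := Metric.denseRange_iff.mp (TopologicalSpace.denseRange_denseSeq ℂ) z r hr
    exact ⟨i, Metric.mem_ball.mpr hi⟩
  set E : ℕ → Set ℂ := disjointed B with hE
  set P : ℕ → Set Γ := fun i => g ⁻¹' E i with hP
  have hPmeas : ∀ i, MeasurableSet (P i) :=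
    fun i => hg (MeasurableSet.disjointed (fun j => measurableSet_ball) i)
  have hPdisj : Pairwise (Function.onFun Disjoint P) := fun i j hij =>
    Disjoint.preimage g (disjoint_disjointed B hij)
  have hPunion : (⋃ i, P i) = univ := by
    rw [hP, ← preimage_iUnion, iUnion_disjointed, hBcover, preimage_univ]
  -- choose a finite number of the `P i` covering almost everything
  set R : ℕ → Set Γ := fun m => (⋃ i ∈ Finset.range m, P i)ᶜ with hR
  have hRanti : Antitone R := fun m m' hmm' => compl_subset_compl.mpr
    (biUnion_subset_biUnion_left (by exact_mod_cast Finset.range_subset_range.mpr hmm'))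
  have hRempty : (⋂ m, R m) = ∅ := by
    rw [eq_empty_iff_forall_notMem]
    intro x hx
    have : x ∈ ⋃ i, P i := hPunion ▸ mem_univ x
    obtain ⟨i, hi⟩ := mem_iUnion.mp this
    have := mem_iInter.mp hx (i + 1)
    exact this (mem_biUnion (Finset.self_mem_range_succ i) hi)
  have hRtendsto : Filter.Tendsto (μ ∘ R) Filter.atTop (nhds 0) := by
    have h := tendsto_measure_iInter_atTop
      (fun m => ((Finset.range m).measurableSet_biUnion (fun i _ => hPmeas i)).compl.nullMeasurableSet)
      hRanti ⟨0, measure_ne_top μ _⟩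
    rwa [hRempty, measure_empty] at h
  have hβ2 : (0:ℝ≥0∞) < β / 2 := ENNReal.half_pos hβ0
  obtain ⟨m, hm⟩ := (hRtendsto.eventually_lt_const hβ2).exists
  -- choose compact subsets of the `P i`
  have hslack : ∀ i : ℕ, (β / 4 * 2⁻¹ ^ i) ≠ 0 := by
    intro i
    refine mul_ne_zero ?_ ?_
    · simp only [ne_eq, ENNReal.div_eq_zero_iff, hβ0, false_or]; norm_num
    · refine pow_ne_zero _ ?_
      simp only [ne_eq, ENNReal.inv_eq_zero]; norm_num
  have hcomp : ∀ i : ℕ, ∃ C, C ⊆ P i ∧ IsCompact C ∧ μ (P i \ C) < β / 4 * 2⁻¹ ^ i :=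
    fun i => (hPmeas i).exists_isCompact_diff_lt (measure_ne_top μ _) (hslack i)
  choose C hCsub hCcomp hCμ using hcomp
  have hCdisj : Pairwise (Function.onFun Disjoint C) := fun i j hij =>
    (hPdisj hij).mono (hCsub i) (hCsub j)
  set K : Set Γ := ⋃ i ∈ Finset.range m, C i with hK
  have hKcomp : IsCompact K := (Finset.range m).finite_toSet.isCompact_biUnion
    (fun i _ => hCcomp i)
  have hKμ : μ Kᶜ ≤ β := by
    have hsub : Kᶜ ⊆ R m ∪ ⋃ i ∈ Finset.range m, (P i \ C i) := by
      intro x hx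
      by_cases hxR : x ∈ R m
      · exact Or.inl hxR
      · have : x ∈ ⋃ i ∈ Finset.range m, P i := not_not.mp hxR
        obtain ⟨i, him, hiP⟩ := mem_iUnion₂.mp this
        refine Or.inr (mem_iUnion₂.mpr ⟨i, him, hiP, fun hC => hx ?_⟩)
        exact mem_iUnion₂.mpr ⟨i, him, hC⟩
    calc μ Kᶜ ≤ μ (R m) + μ (⋃ i ∈ Finset.range m, (P i \ C i)) :=
          (measure_mono hsub).trans (measure_union_le _ _)
      _ ≤ β / 2 + ∑' i, μ (P i \ C i) := by
          refine add_le_add hm.le ?_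
          refine (measure_biUnion_finset_le _ _).trans ?_
          exact ENNReal.sum_le_tsum _
      _ ≤ β / 2 + ∑' i : ℕ, β / 4 * 2⁻¹ ^ i := by
          gcongr with i
          exact (hCμ i).le
      _ = β / 2 + β / 4 * 2 := by
          rw [ENNReal.tsum_mul_left, ENNReal.tsum_geometric, ENNReal.one_sub_inv_two, inv_inv]
      _ = β / 2 + β / 2 := by
          congr 1
          rw [div_eq_mul_inv, div_eq_mul_inv, mul_assoc]
          congr 1
          rw [show (4:ℝ≥0∞) = 2 * 2 by norm_num,
            ENNReal.mul_inv (by norm_num) (by norm_num), mul_assoc,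
            ENNReal.inv_mul_cancel (by norm_num) (by norm_num), mul_one]
      _ = β := ENNReal.add_halves β
  set s : Γ → ℂ := fun γ => ∑ i ∈ Finset.range m, (C i).indicator (fun _ => u i) γ with hs
  refine ⟨K, hKcomp, hKμ, s, ?_, ?_⟩
  · -- continuity on K
    refine continuousOn_finset_sum _ (fun i him => ?_)
    intro x hx
    obtain ⟨j, hjm, hxj⟩ := mem_iUnion₂.mp hx
    set U : Set Γ := (⋃ k ∈ Finset.range m, ⋃ (_ : k ≠ j), C k)ᶜ with hU
    have hUopen : IsOpen U := by
      rw [hU, isOpen_compl_iff]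
      refine (Finset.range m).finite_toSet.isClosed_biUnion (fun k _ => ?_)
      by_cases hkj : k ≠ j
      · simpa [hkj] using (hCcomp k).isClosed
      · simp [hkj]
    have hxU : x ∈ U := by
      rw [hU, mem_compl_iff]
      intro hmem
      obtain ⟨k, hkm, hkj, hxk⟩ := by
        simpa only [mem_iUnion, exists_prop] using hmem
      exact (hCdisj hkj).le_bot ⟨hxk, hxj⟩
    have hconst : ∀ y ∈ U ∩ K, (C i).indicator (fun _ => u i) y
        = (C i).indicator (fun _ => u i) x := by
      rintro y ⟨hyU, hyK⟩
      obtain ⟨j', hj'm, hyj'⟩ := mem_iUnion₂.mp hyK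
      have hj'j : j' = j := by
        by_contra hne
        exact hyU (mem_iUnion₂.mpr ⟨j', hj'm, mem_iUnion.mpr ⟨hne, hyj'⟩⟩)
      have hyCj : y ∈ C j := by rw [← hj'j]; exact hyj'
      by_cases hij : i = j
      · rw [indicator_of_mem (show y ∈ C i by rw [hij]; exact hyCj),
          indicator_of_mem (show x ∈ C i by rw [hij]; exact hxj)]
      · have hyn : y ∉ C i := fun hyc => (hCdisj hij).le_bot ⟨hyc, hyCj⟩
        have hxn : x ∉ C i := fun hxc => (hCdisj hij).le_bot ⟨hxc, hxj⟩
        rw [indicator_of_notMem hyn, indicator_of_notMem hxn]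
    have hmem : K ∩ U ∈ nhdsWithin x K :=
      inter_mem_nhdsWithin K (hUopen.mem_nhds hxU)
    refine ContinuousWithinAt.congr_of_eventuallyEq
      (continuousWithinAt_const (b := (C i).indicator (fun _ => u i) x)) ?_ rfl
    filter_upwards [hmem] with y hy
    exact hconst y ⟨hy.2, hy.1⟩
  · -- approximation
    intro γ hγ
    obtain ⟨j, hjm, hγj⟩ := mem_iUnion₂.mp hγ
    have hsγ : s γ = u j := by
      show (∑ i ∈ Finset.range m, (C i).indicator (fun _ => u i) γ) = u j
      rw [Finset.sum_eq_single j]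
      · exact indicator_of_mem hγj _
      · intro k hk hkj
        exact indicator_of_notMem (fun hc => (hCdisj hkj).le_bot ⟨hc, hγj⟩) _
      · intro h; exact absurd hjm h
    have : g γ ∈ B j := disjointed_subset B j (hCsub j hγj)
    rw [hsγ]
    have := Metric.mem_ball.mp this
    rw [← dist_eq_norm]
    exact this.le

/-- Lusin's theorem for finite inner-regular measures. -/
lemma lusin_aux {Γ : Type*} [TopologicalSpace Γ] [T2Space Γ]
    [MeasurableSpace Γ] [OpensMeasurableSpace Γ]
    (μ : Measure Γ) [IsFiniteMeasure μ] [μ.InnerRegularCompactLTTop]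
    {g : Γ → ℂ} (hg : Measurable g) {δ : ℝ≥0∞} (hδ0 : 0 < δ) (hδtop : δ ≠ ∞) :
    ∃ K, IsCompact K ∧ μ Kᶜ < δ ∧ ContinuousOn g K := by
  have hδ8 : δ / 8 ≠ 0 := by
    simp only [ne_eq, ENNReal.div_eq_zero_iff, hδ0.ne', false_or]; norm_num
  have hδ8top : δ / 8 ≠ ∞ := (ENNReal.div_lt_top hδtop (by norm_num)).ne
  have key : ∀ n : ℕ, ∃ K, IsCompact K ∧ μ Kᶜ ≤ δ / 8 * 2⁻¹ ^ n ∧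
      ∃ s : Γ → ℂ, ContinuousOn s K ∧ ∀ γ ∈ K, ‖g γ - s γ‖ ≤ 1 / (n + 1) := by
    intro n
    refine lusin_step μ hg (by positivity) ?_ ?_
    · exact mul_ne_zero hδ8 (pow_ne_zero _ (by simp only [ne_eq, ENNReal.inv_eq_zero]; norm_num))
    · exact ENNReal.mul_ne_top hδ8top (ENNReal.pow_ne_top (by norm_num))
  choose K hKcomp hKμ s hscont hsbound using key
  refine ⟨⋂ n, K n, ?_, ?_, ?_⟩
  · exact (hKcomp 0).of_isClosed_subset (isClosed_iInter fun n => (hKcomp n).isClosed)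
      (iInter_subset K 0)
  · calc μ (⋂ n, K n)ᶜ = μ (⋃ n, (K n)ᶜ) := by rw [compl_iInter]
      _ ≤ ∑' n, μ (K n)ᶜ := measure_iUnion_le _
      _ ≤ ∑' n : ℕ, δ / 8 * 2⁻¹ ^ n := ENNReal.tsum_le_tsum hKμ
      _ = δ / 8 * 2 := by
          rw [ENNReal.tsum_mul_left, ENNReal.tsum_geometric, ENNReal.one_sub_inv_two, inv_inv]
      _ < δ / 8 * 8 := by rw [ENNReal.mul_lt_mul_iff_right hδ8 hδ8top]; norm_num
      _ = δ := ENNReal.div_mul_cancel (by norm_num) (by norm_num)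
  · have huc : TendstoUniformlyOn (fun n => s n) g Filter.atTop (⋂ n, K n) := by
      rw [Metric.tendstoUniformlyOn_iff]
      intro ε hε
      obtain ⟨n₀, hn₀⟩ := exists_nat_one_div_lt hε
      filter_upwards [Filter.eventually_ge_atTop n₀] with n hn x hx
      have h1 : ‖g x - s n x‖ ≤ 1 / (n + 1) := hsbound n x (mem_iInter.mp hx n)
      rw [dist_eq_norm]
      refine lt_of_le_of_lt (h1.trans ?_) hn₀
      refine one_div_le_one_div_of_le (by positivity) ?_
      have : (n₀ : ℝ) ≤ n := by exact_mod_cast hn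
      linarith
    exact huc.continuousOn (Filter.Eventually.of_forall fun n =>
      (hscont n).mono (iInter_subset K n)).frequently

/-- Factorization through a continuous map on a compact set. -/
lemma factor_aux {X Y : Type*} [TopologicalSpace X] [TopologicalSpace Y] [T2Space Y]
    {K : Set X} (hK : IsCompact K) {Φ : X → Y} (hΦ : Continuous Φ) {g : X → ℂ}
    (hg : ContinuousOn g K) (hfib : ∀ a b, Φ a = Φ b → g a = g b) :
    ∃ h : ↥(Φ '' K) → ℂ, Continuous h ∧
      ∀ γ (hγ : γ ∈ K), h ⟨Φ γ, mem_image_of_mem Φ hγ⟩ = g γ := by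
  haveI : CompactSpace ↥K := isCompact_iff_compactSpace.mp hK
  set q : ↥K → ↥(Φ '' K) := fun a => ⟨Φ a, mem_image_of_mem Φ a.2⟩ with hq
  have hqc : Continuous q := Continuous.subtype_mk (hΦ.comp continuous_subtype_val) _
  have hqs : Function.Surjective q := by
    rintro ⟨y, hy⟩
    obtain ⟨a, haK, rfl⟩ := hy
    exact ⟨⟨a, haK⟩, rfl⟩
  have hquot : IsQuotientMap q := IsQuotientMap.of_surjective_continuous hqs hqc
  classical
  set h : ↥(Φ '' K) → ℂ := fun t => g t.2.choose with hh
  have hcomm : ∀ a : ↥K, h (q a) = g ↑a := by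
    intro a
    obtain ⟨h1, h2⟩ := (q a).2.choose_spec
    exact hfib _ _ h2
  have hhc : Continuous h := by
    rw [hquot.continuous_iff]
    have : (h ∘ q) = fun a : ↥K => g ↑a := funext hcomm
    rw [this]
    exact hg.restrict
  exact ⟨h, hhc, fun γ hγ => hcomm ⟨γ, hγ⟩⟩

/-- The space of trigonometric polynomials with frequencies from the coset `x + H`,
where `e x γ` denotes the value `⟨γ, x⟩` of the character `γ ∈ Γ` at `x ∈ G`. -/
def trigPoly {G Γ : Type*} [AddCommGroup G] (e : G → Γ → ℂ) (H : AddSubgroup G)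
    (x : G) : Set (Γ → ℂ) :=
  (Submodule.span ℂ {f : Γ → ℂ | ∃ y ∈ H, f = e (x + y)} : Submodule ℂ (Γ → ℂ))

/-- Membership in the closure `C_α P(x̃)` of `trigPoly e H x` in `L^α(μ)`. -/
def memCl {G Γ : Type*} [AddCommGroup G] [MeasurableSpace Γ] (e : G → Γ → ℂ)
    (H : AddSubgroup G) (α : ℝ≥0∞) (μ : Measure Γ) (x : G) (f : Γ → ℂ) : Prop :=
  MemLp f α μ ∧
    ∀ ε : ℝ≥0∞, 0 < ε → ∃ p ∈ trigPoly e H x, eLpNorm (f - p) α μ < ε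

/-- If `f ∈ L^α(μ)` satisfies `f(γ + λ) = ⟨λ, x⟩ f(γ)` for `μ`-a.a. `γ`
and every `λ ∈ Λ`, then `f` belongs to the closure `C_α P(x̃)` of the trigonometric
polynomials with frequencies in `x + H`. -/
theorem stmt15 {G Γ : Type*}
    [AddCommGroup G] [TopologicalSpace G] [IsTopologicalAddGroup G] [T2Space G]
    [LocallyCompactSpace G]
    [AddCommGroup Γ] [TopologicalSpace Γ] [IsTopologicalAddGroup Γ] [T2Space Γ]
    [LocallyCompactSpace Γ] [MeasurableSpace Γ] [BorelSpace Γ]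
    (e : G → Γ → ℂ)
    (he_cont : ∀ x, Continuous (e x))
    (he_norm : ∀ x γ, ‖e x γ‖ = 1)
    (he_addG : ∀ x y γ, e (x + y) γ = e x γ * e y γ)
    (he_addΓ : ∀ x γ δ, e x (γ + δ) = e x γ * e x δ)
    (H : AddSubgroup G) (hHc : IsClosed (H : Set G))
    (Λ : AddSubgroup Γ) [Countable Λ]
    (hΛ : ∀ γ : Γ, γ ∈ Λ ↔ ∀ y ∈ H, e y γ = 1)
    (μ : Measure Γ) [IsFiniteMeasure μ] [μ.Regular]
    (α : ℝ≥0∞) (hα0 : 0 < α) (hαtop : α ≠ ∞)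
    (x : G) (f : Γ → ℂ) (hf : MemLp f α μ)
    (hper : ∀ l : Λ, ∀ᵐ γ ∂μ, f (γ + (l : Γ)) = e x (l : Γ) * f γ) :
    memCl e H α μ x f := by
  classical
  have hα0' : α ≠ 0 := hα0.ne'
  have hαt0 : 0 < α.toReal := ENNReal.toReal_pos hα0' hαtop
  -- basic facts about the pairing
  have he_ne : ∀ y γ, e y γ ≠ 0 := fun y γ h => by
    have := he_norm y γ; rw [h] at this; simpa using this
  have he_zero : ∀ γ : Γ, e 0 γ = 1 := by
    intro γ
    have h : e 0 γ = e 0 γ * e 0 γ := by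
      have := he_addG 0 0 γ; rwa [add_zero] at this
    have h2 : e 0 γ * 1 = e 0 γ * e 0 γ := by rw [mul_one, ← h]
    exact (mul_left_cancel₀ (he_ne 0 γ) h2).symm
  have hconj_mul : ∀ z : ℂ, ‖z‖ = 1 → (starRingEnd ℂ) z * z = 1 := by
    intro z hz
    rw [mul_comm, Complex.mul_conj, Complex.normSq_eq_norm_sq, hz]
    norm_num
  have he_conj : ∀ (y : G) (γ : Γ), (starRingEnd ℂ) (e y γ) = e (-y) γ := by
    intro y γ
    have h1 : e y γ * e (-y) γ = 1 := by rw [← he_addG, add_neg_cancel, he_zero]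
    have h2 : e y γ * (starRingEnd ℂ) (e y γ) = 1 := by
      rw [mul_comm]; exact hconj_mul _ (he_norm y γ)
    exact mul_left_cancel₀ (he_ne y γ) (h2.trans h1.symm)
  -- the compact "Bohr" target and the joint character map
  set Φ : Γ → (↥H → ↥(Metric.sphere (0:ℂ) 1)) := fun γ y =>
    ⟨e ↑y γ, by rw [mem_sphere_zero_iff_norm]; exact he_norm ↑y γ⟩ with hΦdef
  have hΦcont : Continuous Φ :=
    continuous_pi fun y => Continuous.subtype_mk (he_cont ↑y) _
  -- the de-twisted function g
  set g : Γ → ℂ := fun γ => (starRingEnd ℂ) (e x γ) * f γ with hgdef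
  have hgAESM : AEStronglyMeasurable g μ :=
    ((continuous_star.comp (he_cont x)).aestronglyMeasurable).mul hf.aestronglyMeasurable
  have hg_norm : ∀ γ, ‖g γ‖ = ‖f γ‖ := by
    intro γ
    simp only [hgdef, norm_mul]
    rw [show ‖(starRingEnd ℂ) (e x γ)‖ = ‖e x γ‖ from norm_star _, he_norm, one_mul]
  have hg_mem : MemLp g α μ :=
    ⟨hgAESM, by
      rw [eLpNorm_congr_norm_ae (Filter.Eventually.of_forall hg_norm)]; exact hf.2⟩
  have hg_per : ∀ l : Λ, ∀ᵐ γ ∂μ, g (γ + (l : Γ)) = g γ := by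
    intro l
    filter_upwards [hper l] with γ hγ
    show (starRingEnd ℂ) (e x (γ + (l : Γ))) * f (γ + (l : Γ)) = (starRingEnd ℂ) (e x γ) * f γ
    rw [he_addΓ, map_mul, hγ]
    have h1 : (starRingEnd ℂ) (e x ↑l) * e x ↑l = 1 := hconj_mul _ (he_norm x ↑l)
    calc (starRingEnd ℂ) (e x γ) * (starRingEnd ℂ) (e x ↑l) * (e x ↑l * f γ)
        = (starRingEnd ℂ) (e x γ) * (((starRingEnd ℂ) (e x ↑l) * e x ↑l) * f γ) := by ring
      _ = (starRingEnd ℂ) (e x γ) * f γ := by rw [h1, one_mul]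
  -- exceptional null set and the periodic modification G'
  have hg_all : ∀ᵐ γ ∂μ, ∀ l : Λ, g (γ + (l : Γ)) = g γ := (MeasureTheory.ae_all_iff).mpr hg_per
  set N : Set Γ := toMeasurable μ {γ | ¬ ∀ l : Λ, g (γ + (l : Γ)) = g γ} with hNdef
  have hNnull : μ N = 0 := by
    rw [hNdef, measure_toMeasurable]
    exact hg_all
  have hNprop : ∀ γ, γ ∉ N → ∀ l : Λ, g (γ + (l : Γ)) = g γ := fun γ hγ =>
    not_not.mp (fun h => hγ (subset_toMeasurable μ _ h))
  set G' : Γ → ℂ := fun γ => if h : ∃ l : Λ, γ + (l : Γ) ∉ N then g (γ + (h.choose : Γ)) else 0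
    with hG'def
  have hwd : ∀ γ (l : Λ), γ + (l : Γ) ∉ N → G' γ = g (γ + (l : Γ)) := by
    intro γ l hl
    have hex : ∃ l' : Λ, γ + (l' : Γ) ∉ N := ⟨l, hl⟩
    simp only [hG'def]
    rw [dif_pos hex]
    have h₀ : γ + (hex.choose : Γ) ∉ N := hex.choose_spec
    have h1 := hNprop _ h₀ (l - hex.choose)
    have harg : γ + (hex.choose : Γ) + ((l - hex.choose : Λ) : Γ) = γ + (l : Γ) := by
      rw [AddSubgroup.coe_sub]; abel
    rw [harg] at h1
    exact h1.symm
  have hGper : ∀ γ (l : Λ), G' (γ + (l : Γ)) = G' γ := by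
    intro γ l
    by_cases hex : ∃ m : Λ, γ + (m : Γ) ∉ N
    · obtain ⟨m, hm⟩ := hex
      have h1 : γ + (l : Γ) + ((m - l : Λ) : Γ) ∉ N := by
        rw [AddSubgroup.coe_sub, show γ + (l : Γ) + ((m : Γ) - (l : Γ)) = γ + (m : Γ) by abel]
        exact hm
      rw [hwd (γ + (l : Γ)) (m - l) h1, hwd γ m hm]
      congr 1
      rw [AddSubgroup.coe_sub]; abel
    · have hex2 : ¬ ∃ m : Λ, γ + (l : Γ) + (m : Γ) ∉ N := by
        rintro ⟨m, hm⟩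
        exact hex ⟨l + m, by rw [AddSubgroup.coe_add, ← add_assoc]; exact hm⟩
      simp only [hG'def]
      rw [dif_neg hex2, dif_neg hex]
  have hG'eq : ∀ γ ∉ N, G' γ = g γ := by
    intro γ hγ
    have h := hwd γ 0 (by simpa using hγ)
    simpa using h
  have hG'ae : G' =ᵐ[μ] g := by
    have hae : ∀ᵐ γ ∂μ, γ ∉ N := by
      rw [MeasureTheory.ae_iff]
      simpa [not_not] using hNnull
    filter_upwards [hae] with γ hγ using hG'eq γ hγ
  have hG'AESM : AEStronglyMeasurable G' μ := hgAESM.congr hG'ae.symm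
  have hG'mem : MemLp G' α μ := ⟨hG'AESM, by rw [eLpNorm_congr_ae hG'ae]; exact hg_mem.2⟩
  -- fiber constancy
  have hfibΛ : ∀ γ γ' : Γ, Φ γ = Φ γ' → γ' - γ ∈ Λ := by
    intro γ γ' hΦe
    rw [hΛ]
    intro y hy
    have h1 : e y γ = e y γ' := by
      have h := congrFun hΦe ⟨y, hy⟩
      exact Subtype.ext_iff.mp h
    have h2 : e y γ * e y (γ' - γ) = e y γ' := by
      rw [← he_addΓ]
      congr 1
      abel
    rw [← h1] at h2
    exact mul_left_cancel₀ (he_ne y γ) (h2.trans (mul_one (e y γ)).symm)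
  have hGfib : ∀ γ γ', Φ γ = Φ γ' → G' γ = G' γ' := by
    intro γ γ' hΦe
    have hl : γ' - γ ∈ Λ := hfibΛ γ γ' hΦe
    have h := hGper γ ⟨γ' - γ, hl⟩
    have h2 : γ + ((⟨γ' - γ, hl⟩ : Λ) : Γ) = γ' := by
      show γ + (γ' - γ) = γ'
      abel
    rw [h2] at h
    exact h.symm
  -- strongly measurable representative
  set g₀ : Γ → ℂ := hG'AESM.mk G' with hg₀def
  have hg₀sm : StronglyMeasurable g₀ := hG'AESM.stronglyMeasurable_mk
  have hG'g₀ : G' =ᵐ[μ] g₀ := hG'AESM.ae_eq_mk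
  have hg₀mem : MemLp g₀ α μ :=
    ⟨hg₀sm.aestronglyMeasurable, by rw [eLpNorm_congr_ae hG'g₀.symm]; exact hG'mem.2⟩
  -- span facts
  set S₀ : Submodule ℂ (Γ → ℂ) := Submodule.span ℂ {u : Γ → ℂ | ∃ y ∈ H, u = e y} with hS₀def
  have hmulS₀ : ∀ u ∈ S₀, ∀ v ∈ S₀, u * v ∈ S₀ := by
    intro u hu v hv
    have h1 : u * v ∈ S₀ * S₀ := Submodule.mul_mem_mul hu hv
    have h2 : (S₀ * S₀ : Submodule ℂ (Γ → ℂ)) ≤ S₀ := by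
      rw [hS₀def, Submodule.span_mul_span]
      refine Submodule.span_le.mpr ?_
      rintro w ⟨w1, hw1, w2, hw2, rfl⟩
      obtain ⟨y1, hy1, rfl⟩ := hw1
      obtain ⟨y2, hy2, rfl⟩ := hw2
      refine Submodule.subset_span ⟨y1 + y2, H.add_mem hy1 hy2, ?_⟩
      funext γ
      exact (he_addG y1 y2 γ).symm
    exact h2 h1
  have hstarS₀ : ∀ u ∈ S₀, star u ∈ S₀ := by
    intro u hu
    induction hu using Submodule.span_induction with
    | mem w hw =>
        obtain ⟨y, hy, rfl⟩ := hw
        refine Submodule.subset_span ⟨-y, H.neg_mem hy, ?_⟩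
        funext γ
        show star (e y γ) = e (-y) γ
        rw [Complex.star_def, he_conj]
    | zero => rw [star_zero]; exact Submodule.zero_mem S₀
    | add u v hu hv ihu ihv => rw [star_add]; exact Submodule.add_mem _ ihu ihv
    | smul c u hu ihu => rw [star_smul]; exact Submodule.smul_mem _ _ ihu
  -- main approximation argument
  refine ⟨hf, ?_⟩
  intro ε hε
  set ε₀ : ℝ≥0∞ := min ε 1 with hε₀def
  have hε₀0 : ε₀ ≠ 0 := (lt_min hε zero_lt_one).ne'
  have hε₀top : ε₀ ≠ ∞ := ((min_le_right _ _).trans_lt ENNReal.one_lt_top).ne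
  set D : ℝ≥0∞ := ENNReal.LpAddConst α + 1 with hDdef
  have hD1 : 1 ≤ D := le_add_self
  have hDtop : D ≠ ∞ := by
    simp only [hDdef, ne_eq, ENNReal.add_eq_top, not_or]
    exact ⟨(ENNReal.LpAddConst_lt_top α).ne, ENNReal.one_ne_top⟩
  have hCD : ENNReal.LpAddConst α ≤ D := le_add_right le_rfl
  set k : ℝ≥0∞ := 6 * D ^ 2 with hkdef
  have hD0 : D ≠ 0 := by
    intro h
    rw [h] at hD1
    exact absurd hD1 (by simp)
  have hk0 : k ≠ 0 := mul_ne_zero (by norm_num) (pow_ne_zero 2 hD0)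
  have hktop : k ≠ ∞ := by
    refine ENNReal.mul_ne_top (by norm_num) (ENNReal.pow_ne_top hDtop)
  have h2k0 : (2 : ℝ≥0∞) * k ≠ 0 := mul_ne_zero (by norm_num) hk0
  have h2ktop : (2 : ℝ≥0∞) * k ≠ ∞ := ENNReal.mul_ne_top (by norm_num) hktop
  set ε' : ℝ≥0∞ := ε₀ / (2 * k) with hε'def
  have hε'0 : 0 < ε' := ENNReal.div_pos hε₀0 h2ktop
  have hε'top : ε' ≠ ∞ := (ENNReal.div_lt_top hε₀top h2k0).ne
  have hkε' : k * ε' = ε₀ / 2 := by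
    have h2 : (2 : ℝ≥0∞) * (k * ε') = ε₀ := by
      rw [← mul_assoc]
      exact ENNReal.mul_div_cancel h2k0 h2ktop
    exact (ENNReal.eq_div_iff (by norm_num) (by norm_num)).mpr h2
  -- truncation level M
  set F : Γ → ℝ≥0∞ := fun γ => (‖g₀ γ‖₊ : ℝ≥0∞) ^ α.toReal with hFdef
  have hFmeas : Measurable F :=
    (ENNReal.continuous_rpow_const.measurable).comp hg₀sm.measurable.enorm
  set ρ : Measure Γ := μ.withDensity F with hρdef
  have hρuniv : ρ Set.univ ≠ ∞ := by
    have h1 : eLpNorm g₀ α μ < ∞ := hg₀mem.2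
    rw [eLpNorm_eq_lintegral_rpow_enorm_toReal hα0' hαtop] at h1
    have h2 : ∫⁻ γ, F γ ∂μ ≠ ∞ := by
      intro hcon
      simp only [hFdef, ← enorm_eq_nnnorm] at hcon
      rw [hcon, ENNReal.top_rpow_of_pos (by positivity)] at h1
      exact absurd h1 (lt_irrefl _)
    rw [hρdef, withDensity_apply _ MeasurableSet.univ, setLIntegral_univ]
    exact h2
  set A : ℕ → Set Γ := fun n => {γ | (n : ℝ) < ‖g₀ γ‖} with hAdef
  have hAmeas : ∀ n, MeasurableSet (A n) := fun n =>
    measurableSet_lt measurable_const hg₀sm.measurable.norm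
  have hAanti : Antitone A := by
    intro n n' hnn' γ hγ
    simp only [hAdef, Set.mem_setOf_eq] at hγ ⊢
    have h1 : (n : ℝ) ≤ (n' : ℝ) := by exact_mod_cast hnn'
    exact lt_of_le_of_lt h1 hγ
  have hAempty : (⋂ n, A n) = ∅ := by
    rw [eq_empty_iff_forall_notMem]
    intro γ hγ
    obtain ⟨n, hn⟩ := exists_nat_gt ‖g₀ γ‖
    exact absurd (mem_iInter.mp hγ n) (not_lt.mpr hn.le)
  have htend : Filter.Tendsto (fun n => ρ (A n)) Filter.atTop (nhds 0) := by
    have h := tendsto_measure_iInter_atTop (μ := ρ)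
      (fun n => (hAmeas n).nullMeasurableSet) hAanti
      ⟨0, ((measure_mono (Set.subset_univ _)).trans_lt
        (lt_top_iff_ne_top.mpr hρuniv)).ne⟩
    rw [hAempty, measure_empty] at h
    exact h
  have hε'αpos : 0 < ε' ^ α.toReal := ENNReal.rpow_pos hε'0 hε'top
  obtain ⟨M, hM⟩ := (htend.eventually_lt_const hε'αpos).exists
  set Mr : ℝ := (M : ℝ) with hMrdef
  have hMr0 : (0:ℝ) ≤ Mr := Nat.cast_nonneg M
  -- truncations
  set GM : Γ → ℂ := fun γ => if ‖G' γ‖ ≤ Mr then G' γ else 0 with hGMdef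
  set g₀M : Γ → ℂ := fun γ => if ‖g₀ γ‖ ≤ Mr then g₀ γ else 0 with hg₀Mdef
  have hg₀Msm : StronglyMeasurable g₀M := by
    refine StronglyMeasurable.ite ?_ hg₀sm stronglyMeasurable_const
    exact measurableSet_le hg₀sm.measurable.norm measurable_const
  have hGMae : GM =ᵐ[μ] g₀M := by
    filter_upwards [hG'g₀] with γ hγ
    simp only [hGMdef, hg₀Mdef, hγ]
  have hGMAESM : AEStronglyMeasurable GM μ :=
    hg₀Msm.aestronglyMeasurable.congr hGMae.symm
  have hGMbound : ∀ γ, ‖GM γ‖ ≤ Mr := by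
    intro γ
    simp only [hGMdef]
    split
    · assumption
    · simpa using hMr0
  have hGMfib : ∀ a b, Φ a = Φ b → GM a = GM b := by
    intro a b hab
    simp only [hGMdef, hGfib a b hab]
  -- the first error term
  have hE1 : eLpNorm (G' - GM) α μ < ε' := by
    have hptwise : ∀ᵐ γ ∂μ, ‖(G' - GM) γ‖ ≤ ‖(A M).indicator g₀ γ‖ := by
      filter_upwards [hG'g₀] with γ hγ
      simp only [Pi.sub_apply, hGMdef]
      split
      · simp
      · rename_i h
        rw [sub_zero]
        have hmem : γ ∈ A M := by
          simp only [hAdef, Set.mem_setOf_eq, ← hγ]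
          exact lt_of_not_ge h
        rw [Set.indicator_of_mem hmem, hγ]
    refine lt_of_le_of_lt (eLpNorm_mono_ae hptwise) ?_
    rw [eLpNorm_indicator_eq_eLpNorm_restrict (hAmeas M),
      eLpNorm_eq_lintegral_rpow_enorm_toReal hα0' hαtop]
    have hgoal : (∫⁻ γ, ‖g₀ γ‖ₑ ^ α.toReal ∂(μ.restrict (A M))) = ρ (A M) := by
      rw [hρdef, withDensity_apply _ (hAmeas M)]; rfl
    rw [hgoal]
    calc ρ (A M) ^ (1 / α.toReal)
        < (ε' ^ α.toReal) ^ (1 / α.toReal) := ENNReal.rpow_lt_rpow hM (by positivity)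
      _ = ε' := by
          rw [← ENNReal.rpow_mul, mul_one_div, div_self hαt0.ne', ENNReal.rpow_one]
  -- choice of η
  set Bu : ℝ≥0∞ := (μ Set.univ) ^ (α.toReal)⁻¹ with hBudef
  have hButop : Bu ≠ ∞ :=
    ENNReal.rpow_ne_top_of_nonneg (by positivity) (measure_ne_top μ _)
  have hBu1top : Bu + 1 ≠ ∞ := by simp [hButop]
  set r₁ : ℝ≥0∞ := min 1 (ε' / (Bu + 1)) with hr₁def
  have hr₁0 : r₁ ≠ 0 :=
    (lt_min one_pos (ENNReal.div_pos hε'0.ne' hBu1top)).ne'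
  have hr₁top : r₁ ≠ ∞ := ((min_le_left _ _).trans_lt ENNReal.one_lt_top).ne
  set η : ℝ := r₁.toReal / 2 with hηdef
  have hη0 : 0 < η := by
    have h := ENNReal.toReal_pos hr₁0 hr₁top
    rw [hηdef]; linarith
  have hηle : ENNReal.ofReal η ≤ r₁ := by
    rw [hηdef]
    calc ENNReal.ofReal (r₁.toReal / 2) ≤ ENNReal.ofReal r₁.toReal := by
          refine ENNReal.ofReal_le_ofReal ?_
          have h := ENNReal.toReal_pos hr₁0 hr₁top
          linarith
      _ = r₁ := ENNReal.ofReal_toReal hr₁top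
  have hη1 : η ≤ 1 :=
    ENNReal.ofReal_le_one.mp (hηle.trans (min_le_left _ _))
  -- choice of δK
  set c : ℝ := 3 * Mr + 1 with hcdef
  have hc0 : (0:ℝ) < c := by rw [hcdef]; positivity
  have hcc0 : ((‖c‖₊ : ℝ≥0∞) + 1) ≠ 0 := by simp
  have hcctop : ((‖c‖₊ : ℝ≥0∞) + 1) ≠ ∞ := by simp
  set δK : ℝ≥0∞ := (ε' / ((‖c‖₊ : ℝ≥0∞) + 1)) ^ α.toReal with hδKdef
  have hδK0 : 0 < δK :=
    ENNReal.rpow_pos (ENNReal.div_pos hε'0.ne' hcctop)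
      (ENNReal.div_lt_top hε'top hcc0).ne
  have hδKtop : δK ≠ ∞ :=
    ENNReal.rpow_ne_top_of_nonneg (by positivity) (ENNReal.div_lt_top hε'top hcc0).ne
  -- Lusin's theorem and cleaning up the compact set
  have hδKhalf0 : (0:ℝ≥0∞) < δK / 2 := ENNReal.half_pos hδK0.ne'
  have hδKhalftop : δK / 2 ≠ ∞ := (ENNReal.div_lt_top hδKtop (by norm_num)).ne
  obtain ⟨K₀, hK₀comp, hK₀μ, hK₀cont⟩ :=
    lusin_aux μ hg₀Msm.measurable hδKhalf0 hδKhalftop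
  set V : Set Γ := toMeasurable μ {γ | GM γ ≠ g₀M γ} with hVdef
  have hVnull : μ V = 0 := by
    rw [hVdef, measure_toMeasurable]
    exact hGMae
  have hVmeas : MeasurableSet V := measurableSet_toMeasurable μ _
  set S₁ : Set Γ := K₀ ∩ Vᶜ with hS₁def
  have hS₁meas : MeasurableSet S₁ := hK₀comp.isClosed.measurableSet.inter hVmeas.compl
  obtain ⟨K, hKsub, hKcomp, hKdiff⟩ :=
    hS₁meas.exists_isCompact_diff_lt (measure_ne_top μ _) hδKhalf0.ne'
  have hKμ : μ Kᶜ < δK := by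
    have hsub : Kᶜ ⊆ (K₀ᶜ ∪ V) ∪ (S₁ \ K) := by
      intro γ hγ
      by_cases h1 : γ ∈ S₁
      · exact Or.inr ⟨h1, hγ⟩
      · rw [hS₁def, Set.mem_inter_iff] at h1
        push_neg at h1
        by_cases h2 : γ ∈ K₀
        · exact Or.inl (Or.inr (not_not.mp (h1 h2)))
        · exact Or.inl (Or.inl h2)
    calc μ Kᶜ ≤ μ (K₀ᶜ ∪ V) + μ (S₁ \ K) :=
          (measure_mono hsub).trans (measure_union_le _ _)
      _ ≤ (μ K₀ᶜ + μ V) + μ (S₁ \ K) :=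
          add_le_add_left (measure_union_le _ _) _
      _ = μ K₀ᶜ + μ (S₁ \ K) := by rw [hVnull, add_zero]
      _ < δK / 2 + δK / 2 := ENNReal.add_lt_add hK₀μ hKdiff
      _ = δK := ENNReal.add_halves δK
  have hKV : K ⊆ Vᶜ := hKsub.trans Set.inter_subset_right
  have hKK₀ : K ⊆ K₀ := hKsub.trans Set.inter_subset_left
  have hKGM : Set.EqOn GM g₀M K := by
    intro γ hγ
    have h1 : γ ∉ V := hKV hγ
    have h2 : γ ∉ {γ | GM γ ≠ g₀M γ} := fun h => h1 (subset_toMeasurable μ _ h)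
    exact not_not.mp h2
  have hKcont : ContinuousOn GM K := (hK₀cont.mono hKK₀).congr hKGM
  -- factor through Φ on K and extend by Tietze
  obtain ⟨h₀, hh₀cont, hh₀spec⟩ := factor_aux hKcomp hΦcont hKcont hGMfib
  have hh₀bound : ∀ t : ↥(Φ '' K), ‖h₀ t‖ ≤ Mr := by
    rintro ⟨t, ht⟩
    obtain ⟨γ, hγK, rfl⟩ := ht
    rw [show h₀ ⟨Φ γ, by exact ⟨γ, hγK, rfl⟩⟩ = GM γ from hh₀spec γ hγK]
    exact hGMbound γ
  haveI : CompactSpace ↥(Φ '' K) := isCompact_iff_compactSpace.mp (hKcomp.image hΦcont)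
  have hclosed : IsClosed (Φ '' K) := (hKcomp.image hΦcont).isClosed
  obtain ⟨Hre, hHre_norm, hHre_restrict⟩ :=
    BoundedContinuousFunction.exists_norm_eq_restrict_eq_of_closed
      (BoundedContinuousFunction.mkOfCompact
        ⟨fun t => (h₀ t).re, Complex.continuous_re.comp hh₀cont⟩) hclosed
  obtain ⟨Him, hHim_norm, hHim_restrict⟩ :=
    BoundedContinuousFunction.exists_norm_eq_restrict_eq_of_closed
      (BoundedContinuousFunction.mkOfCompact
        ⟨fun t => (h₀ t).im, Complex.continuous_im.comp hh₀cont⟩) hclosed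
  have hHre_bound : ∀ t, |Hre t| ≤ Mr := by
    intro t
    have h1 : ‖Hre t‖ ≤ ‖Hre‖ := Hre.norm_coe_le_norm t
    rw [Real.norm_eq_abs] at h1
    refine h1.trans ?_
    rw [hHre_norm]
    refine (BoundedContinuousFunction.norm_le hMr0).mpr ?_
    intro t'
    rw [BoundedContinuousFunction.mkOfCompact_apply, ContinuousMap.coe_mk, Real.norm_eq_abs]
    refine (Complex.abs_re_le_norm _).trans ?_
    exact hh₀bound t'
  have hHim_bound : ∀ t, |Him t| ≤ Mr := by
    intro t
    have h1 : ‖Him t‖ ≤ ‖Him‖ := Him.norm_coe_le_norm t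
    rw [Real.norm_eq_abs] at h1
    refine h1.trans ?_
    rw [hHim_norm]
    refine (BoundedContinuousFunction.norm_le hMr0).mpr ?_
    intro t'
    rw [BoundedContinuousFunction.mkOfCompact_apply, ContinuousMap.coe_mk, Real.norm_eq_abs]
    refine (Complex.abs_im_le_norm _).trans ?_
    exact hh₀bound t'
  set ht : (↥H → ↥(Metric.sphere (0:ℂ) 1)) → ℂ :=
    fun t => (Hre t : ℂ) + (Him t : ℂ) * Complex.I with htdef
  have htcont : Continuous ht := by
    refine Continuous.add ?_ (Continuous.mul ?_ continuous_const)
    · exact Complex.continuous_ofReal.comp Hre.continuous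
    · exact Complex.continuous_ofReal.comp Him.continuous
  have htbound : ∀ t, ‖ht t‖ ≤ 2 * Mr := by
    intro t
    simp only [htdef]
    calc ‖(Hre t : ℂ) + (Him t : ℂ) * Complex.I‖
        ≤ ‖(Hre t : ℂ)‖ + ‖(Him t : ℂ) * Complex.I‖ := norm_add_le _ _
      _ = |Hre t| + |Him t| := by
          rw [Complex.norm_real, norm_mul, Complex.norm_real, Complex.norm_I, mul_one,
            Real.norm_eq_abs, Real.norm_eq_abs]
      _ ≤ Mr + Mr := add_le_add (hHre_bound t) (hHim_bound t)
      _ = 2 * Mr := by ring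
  have htK : ∀ γ ∈ K, ht (Φ γ) = GM γ := by
    intro γ hγ
    have hmem : Φ γ ∈ Φ '' K := ⟨γ, hγ, rfl⟩
    have h1 : Hre (Φ γ) = (h₀ ⟨Φ γ, hmem⟩).re := by
      have h := DFunLike.congr_fun hHre_restrict (⟨Φ γ, hmem⟩ : ↥(Φ '' K))
      rw [BoundedContinuousFunction.restrict_apply, BoundedContinuousFunction.mkOfCompact_apply,
        ContinuousMap.coe_mk] at h
      exact h
    have h2 : Him (Φ γ) = (h₀ ⟨Φ γ, hmem⟩).im := by
      have h := DFunLike.congr_fun hHim_restrict (⟨Φ γ, hmem⟩ : ↥(Φ '' K))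
      rw [BoundedContinuousFunction.restrict_apply, BoundedContinuousFunction.mkOfCompact_apply,
        ContinuousMap.coe_mk] at h
      exact h
    simp only [htdef, h1, h2]
    rw [Complex.re_add_im]
    exact hh₀spec γ hγ
  -- Stone-Weierstrass
  set cfun : ↥H → C(↥H → ↥(Metric.sphere (0:ℂ) 1), ℂ) :=
    fun y => ⟨fun t => (t y : ℂ), continuous_subtype_val.comp (continuous_apply y)⟩
    with hcfundef
  set SA : StarSubalgebra ℂ C(↥H → ↥(Metric.sphere (0:ℂ) 1), ℂ) :=
    StarAlgebra.adjoin ℂ (Set.range cfun) with hSAdef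
  have hsep : SA.SeparatesPoints := by
    intro t₁ t₂ hne
    obtain ⟨y, hy⟩ : ∃ y, t₁ y ≠ t₂ y := by
      by_contra h
      push_neg at h
      exact hne (funext h)
    refine ⟨(cfun y : C(_, ℂ)), ⟨cfun y, ?_, rfl⟩, ?_⟩
    · exact StarAlgebra.subset_adjoin ℂ _ ⟨y, rfl⟩
    · intro hcon
      refine hy (Subtype.ext ?_)
      exact hcon
  have htop : SA.topologicalClosure = ⊤ :=
    ContinuousMap.starSubalgebra_topologicalClosure_eq_top_of_separatesPoints SA hsep
  have hmemcl : (⟨ht, htcont⟩ : C(_, ℂ)) ∈ closure (SA : Set C(_, ℂ)) := by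
    have h1 : (⟨ht, htcont⟩ : C(_, ℂ)) ∈ SA.topologicalClosure := by
      rw [htop]; trivial
    exact h1
  obtain ⟨p₀c, hp₀mem, hp₀dist⟩ := Metric.mem_closure_iff.mp hmemcl η hη0
  have hp₀pt : ∀ t, ‖ht t - p₀c t‖ ≤ η := by
    intro t
    have h1 : dist ((⟨ht, htcont⟩ : C(_, ℂ)) t) (p₀c t) ≤
        dist (⟨ht, htcont⟩ : C(_, ℂ)) p₀c := ContinuousMap.dist_apply_le_dist t
    rw [dist_eq_norm] at h1
    exact h1.trans hp₀dist.le
  -- transfer of membership through Φ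
  have htrans : ∀ p₀ : C(↥H → ↥(Metric.sphere (0:ℂ) 1), ℂ), p₀ ∈ SA →
      (fun γ => p₀ (Φ γ)) ∈ S₀ := by
    intro p₀ hp₀
    induction hp₀ using StarAlgebra.adjoin_induction with
    | mem w hw =>
        obtain ⟨y, rfl⟩ := hw
        refine Submodule.subset_span ⟨↑y, y.2, ?_⟩
        funext γ
        rfl
    | algebraMap r =>
        have heq : (fun γ => (algebraMap ℂ C(↥H → ↥(Metric.sphere (0:ℂ) 1), ℂ) r) (Φ γ))
            = r • e (0 : G) := by
          funext γ
          rw [algebraMap_apply]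
          simp [he_zero γ, smul_eq_mul]
        rw [heq]
        exact Submodule.smul_mem _ _ (Submodule.subset_span ⟨0, H.zero_mem, rfl⟩)
    | add u v hu hv ihu ihv =>
        have heq : (fun γ => (u + v) (Φ γ)) = (fun γ => u (Φ γ)) + (fun γ => v (Φ γ)) := by
          funext γ
          simp
        rw [heq]
        exact Submodule.add_mem _ ihu ihv
    | mul u v hu hv ihu ihv =>
        have heq : (fun γ => (u * v) (Φ γ)) = (fun γ => u (Φ γ)) * (fun γ => v (Φ γ)) := by
          funext γ
          simp
        rw [heq]
        exact hmulS₀ _ ihu _ ihv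
    | star u hu ihu =>
        have heq : (fun γ => (star u) (Φ γ)) = star (fun γ => u (Φ γ)) := by
          funext γ
          simp
        rw [heq]
        exact hstarS₀ _ ihu
  set p₂ : Γ → ℂ := fun γ => p₀c (Φ γ) with hp₂def
  have hp₂S₀ : p₂ ∈ S₀ := htrans p₀c hp₀mem
  -- the trigonometric polynomial
  set p : Γ → ℂ := fun γ => e x γ * p₂ γ with hpdef
  have hpmem : p ∈ trigPoly e H x := by
    show p ∈ (Submodule.span ℂ {u : Γ → ℂ | ∃ y ∈ H, u = e (x + y)} : Set (Γ → ℂ))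
    rw [SetLike.mem_coe]
    have hgen : ∀ u ∈ S₀, (fun γ => e x γ * u γ) ∈
        Submodule.span ℂ {u : Γ → ℂ | ∃ y ∈ H, u = e (x + y)} := by
      intro u hu
      induction hu using Submodule.span_induction with
      | mem w hw =>
          obtain ⟨y, hy, rfl⟩ := hw
          refine Submodule.subset_span ⟨y, hy, ?_⟩
          funext γ
          exact (he_addG x y γ).symm
      | zero =>
          have heq : (fun γ => e x γ * (0 : Γ → ℂ) γ) = (0 : Γ → ℂ) := by
            funext γ
            simp
          rw [heq]
          exact Submodule.zero_mem _
      | add u v hu hv ihu ihv =>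
          have heq : (fun γ => e x γ * (u + v) γ)
              = (fun γ => e x γ * u γ) + (fun γ => e x γ * v γ) := by
            funext γ
            simp [mul_add]
          rw [heq]
          exact Submodule.add_mem _ ihu ihv
      | smul a u hu ihu =>
          have heq : (fun γ => e x γ * (a • u) γ) = a • (fun γ => e x γ * u γ) := by
            funext γ
            simp only [Pi.smul_apply, smul_eq_mul]
            ring
          rw [heq]
          exact Submodule.smul_mem _ _ ihu
    exact hgen p₂ hp₂S₀
  refine ⟨p, hpmem, ?_⟩
  -- rewrite the error in terms of G'
  have hfp : eLpNorm (f - p) α μ = eLpNorm (G' - p₂) α μ := by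
    have h1 : ∀ γ, ‖(f - p) γ‖ = ‖(g - p₂) γ‖ := by
      intro γ
      have h3 : e x γ * ((starRingEnd ℂ) (e x γ) * f γ) = f γ := by
        rw [← mul_assoc, mul_comm (e x γ), hconj_mul _ (he_norm x γ), one_mul]
      have h2 : (f - p) γ = e x γ * ((g - p₂) γ) := by
        simp only [Pi.sub_apply, hpdef, hgdef]
        rw [mul_sub, h3]
      rw [h2, norm_mul, he_norm, one_mul]
    rw [eLpNorm_congr_norm_ae (Filter.Eventually.of_forall h1)]
    exact eLpNorm_congr_ae ((hG'ae.sub (Filter.EventuallyEq.refl _ p₂))).symm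
  rw [hfp]
  -- split the error
  set d : Γ → ℂ := GM - p₂ with hddef
  have hp₂AESM : AEStronglyMeasurable p₂ μ :=
    (p₀c.continuous.comp hΦcont).aestronglyMeasurable
  have hdAESM : AEStronglyMeasurable d μ := hGMAESM.sub hp₂AESM
  have hE2 : eLpNorm (K.indicator d) α μ ≤ ε' := by
    have hbound : ∀ᵐ γ ∂μ, ‖K.indicator d γ‖ ≤ η := by
      refine Filter.Eventually.of_forall ?_
      intro γ
      by_cases hγ : γ ∈ K
      · rw [Set.indicator_of_mem hγ]
        have h1 : d γ = ht (Φ γ) - p₀c (Φ γ) := by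
          simp only [hddef, Pi.sub_apply, hp₂def, htK γ hγ]
        rw [h1]
        exact hp₀pt (Φ γ)
      · rw [Set.indicator_of_notMem hγ]
        simpa using hη0.le
    calc eLpNorm (K.indicator d) α μ
        ≤ μ Set.univ ^ (α.toReal)⁻¹ * ENNReal.ofReal η := eLpNorm_le_of_ae_bound hbound
      _ ≤ (Bu + 1) * (ε' / (Bu + 1)) := by
          refine mul_le_mul' ?_ (hηle.trans (min_le_right _ _))
          rw [hBudef]
          exact le_add_right le_rfl
      _ = ε' := ENNReal.mul_div_cancel (by simp) hBu1top
  have hE3 : eLpNorm (Kᶜ.indicator d) α μ ≤ ε' := by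
    have hb : ∀ γ, ‖Kᶜ.indicator d γ‖ ≤ ‖Kᶜ.indicator (fun _ => (c:ℂ)) γ‖ := by
      intro γ
      by_cases hγ : γ ∈ Kᶜ
      · rw [Set.indicator_of_mem hγ, Set.indicator_of_mem hγ]
        have h1 : ‖d γ‖ ≤ ‖GM γ‖ + ‖p₂ γ‖ := norm_sub_le _ _
        have h2 : ‖p₂ γ‖ ≤ ‖p₀c (Φ γ) - ht (Φ γ)‖ + ‖ht (Φ γ)‖ := by
          calc ‖p₂ γ‖ = ‖(p₀c (Φ γ) - ht (Φ γ)) + ht (Φ γ)‖ := by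
                simp only [hp₂def]
                ring_nf
          _ ≤ ‖p₀c (Φ γ) - ht (Φ γ)‖ + ‖ht (Φ γ)‖ := norm_add_le _ _
        have h3 : ‖p₀c (Φ γ) - ht (Φ γ)‖ ≤ η := by
          rw [norm_sub_rev]
          exact hp₀pt (Φ γ)
        have h4 : ‖(c:ℂ)‖ = c := by
          rw [Complex.norm_real, Real.norm_eq_abs, abs_of_pos hc0]
        rw [h4]
        have := hGMbound γ
        have := htbound (Φ γ)
        rw [hcdef]
        linarith [h1, h2, h3, hη1]
      · rw [Set.indicator_of_notMem hγ, Set.indicator_of_notMem hγ]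
    calc eLpNorm (Kᶜ.indicator d) α μ
        ≤ eLpNorm (Kᶜ.indicator fun _ => (c:ℂ)) α μ := eLpNorm_mono hb
      _ = (‖(c:ℂ)‖₊ : ℝ≥0∞) * μ Kᶜ ^ (1 / α.toReal) :=
          eLpNorm_indicator_const hKcomp.isClosed.measurableSet.compl hα0' hαtop
      _ ≤ ((‖c‖₊ : ℝ≥0∞) + 1) * δK ^ (1 / α.toReal) := by
          refine mul_le_mul' ?_ ?_
          · simp only [Complex.nnnorm_real, self_le_add_right]
          · exact ENNReal.rpow_le_rpow hKμ.le (by positivity)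
      _ = ((‖c‖₊ : ℝ≥0∞) + 1) * (ε' / ((‖c‖₊ : ℝ≥0∞) + 1)) := by
          rw [hδKdef, ← ENNReal.rpow_mul, mul_one_div, div_self hαt0.ne', ENNReal.rpow_one]
      _ = ε' := ENNReal.mul_div_cancel hcc0 hcctop
  -- put everything together
  have hsplit1 : G' - p₂ = (G' - GM) + d := by
    funext γ
    simp only [Pi.add_apply, Pi.sub_apply, hddef]
    ring
  have hEd : eLpNorm d α μ ≤ D * (ε' + ε') := by
    have hsplit2 : d = K.indicator d + Kᶜ.indicator d := (K.indicator_self_add_compl d).symm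
    calc eLpNorm d α μ = eLpNorm (K.indicator d + Kᶜ.indicator d) α μ := by rw [← hsplit2]
      _ ≤ ENNReal.LpAddConst α * (eLpNorm (K.indicator d) α μ + eLpNorm (Kᶜ.indicator d) α μ) :=
          eLpNorm_add_le' (hdAESM.indicator hKcomp.isClosed.measurableSet)
            (hdAESM.indicator hKcomp.isClosed.measurableSet.compl) α
      _ ≤ D * (ε' + ε') := mul_le_mul' hCD (add_le_add hE2 hE3)
  have hDD : D ≤ D ^ 2 := by
    rw [pow_two]
    exact le_mul_of_one_le_left (by positivity) hD1
  calc eLpNorm (G' - p₂) α μ = eLpNorm ((G' - GM) + d) α μ := by rw [← hsplit1]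
    _ ≤ ENNReal.LpAddConst α * (eLpNorm (G' - GM) α μ + eLpNorm d α μ) :=
        eLpNorm_add_le' (hG'AESM.sub hGMAESM) hdAESM α
    _ ≤ D * (ε' + D * (ε' + ε')) := mul_le_mul' hCD (add_le_add hE1.le hEd)
    _ = D * ε' + 2 * (D ^ 2 * ε') := by ring
    _ ≤ D ^ 2 * ε' + 2 * (D ^ 2 * ε') := by
        refine add_le_add_left (mul_le_mul' hDD le_rfl) _
    _ = 3 * (D ^ 2 * ε') := by ring
    _ ≤ 6 * (D ^ 2 * ε') := by
        refine mul_le_mul' ?_ le_rfl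
        norm_num
    _ = k * ε' := by rw [hkdef]; ring
    _ = ε₀ / 2 := hkε'
    _ < ε₀ := ENNReal.half_lt_self hε₀0 hε₀top
    _ ≤ ε := min_le_left _ _
end

section
/- In the setting of the projection formula, the operator (P_{x̃} f)(γ) := Σ_{λ∈Λ} ⟨−λ, x⟩ f(γ + λ) g(γ + λ) satisfies ‖P_{x̃} f‖_{L^1(μ)} ≤ ‖f‖_{L^1(μ)} for every f ∈ L^1(μ). -/
open MeasureTheory Set Pointwise
open scoped ENNReal

/-- Unconditional triangle inequality for `tsum` in `ℝ≥0∞`-norm, for complex series. -/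
lemma stmt18_enn_nnnorm_tsum_le {ι : Type*} (a : ι → ℂ) :
    (‖∑' i, a i‖₊ : ℝ≥0∞) ≤ ∑' i, (‖a i‖₊ : ℝ≥0∞) := by
  by_cases h : Summable a
  · have hn : Summable fun i => ‖a i‖₊ := by
      rw [← NNReal.summable_coe]
      simpa using summable_norm_iff.mpr h
    calc (‖∑' i, a i‖₊ : ℝ≥0∞) ≤ ((∑' i, ‖a i‖₊ : NNReal) : ℝ≥0∞) :=
          ENNReal.coe_le_coe.2 (nnnorm_tsum_le hn)
      _ = ∑' i, (‖a i‖₊ : ℝ≥0∞) := ENNReal.coe_tsum hn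
  · rw [tsum_eq_zero_of_not_summable h]; simp

/-- The operator `(P_{x̃}f)(γ) := ∑_{λ∈Λ} ⟨-λ, x⟩ f(γ+λ) g(γ+λ)`, with
`g = dμ/dρ` and `ρ = ∑_{λ∈Λ} μ(λ + ·)`, satisfies `‖P_{x̃}f‖_{L¹(μ)} ≤ ‖f‖_{L¹(μ)}`
for every `f ∈ L¹(μ)`. -/
theorem stmt18 {G Γ : Type*}
    [AddCommGroup G] [TopologicalSpace G] [IsTopologicalAddGroup G] [T2Space G]
    [LocallyCompactSpace G]
    [AddCommGroup Γ] [TopologicalSpace Γ] [IsTopologicalAddGroup Γ] [T2Space Γ]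
    [LocallyCompactSpace Γ] [MeasurableSpace Γ] [BorelSpace Γ]
    (e : G → Γ → ℂ)
    (he_cont : ∀ x, Continuous (e x))
    (he_norm : ∀ x γ, ‖e x γ‖ = 1)
    (he_addG : ∀ x y γ, e (x + y) γ = e x γ * e y γ)
    (he_addΓ : ∀ x γ δ, e x (γ + δ) = e x γ * e x δ)
    (H : AddSubgroup G) (hHc : IsClosed (H : Set G))
    (Λ : AddSubgroup Γ) [Countable Λ]
    (hΛ : ∀ γ : Γ, γ ∈ Λ ↔ ∀ y ∈ H, e y γ = 1)
    (μ : Measure Γ) [IsFiniteMeasure μ] [μ.Regular]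
    (T : Set Γ) (hT : MeasurableSet T)
    (htrans : ∀ γ : Γ, ∃! t, t ∈ T ∧ γ - t ∈ Λ)
    (ρ : Measure Γ)
    (hρ : ρ = Measure.sum fun l : Λ => Measure.map (fun γ => γ - (l : Γ)) μ)
    (x : G) (f : Γ → ℂ) (hf : Integrable f μ)
    (Pf : Γ → ℂ)
    (hPf : Pf = fun γ => ∑' l : Λ,
      e x (-(l : Γ)) * ((μ.rnDeriv ρ (γ + (l : Γ))).toReal : ℂ) * f (γ + (l : Γ))) :
    eLpNorm Pf 1 μ ≤ eLpNorm f 1 μ := by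
  classical
  set g : Γ → ℝ≥0∞ := μ.rnDeriv ρ with hg
  have hgm : Measurable g := μ.measurable_rnDeriv ρ
  -- the tiles `A l = {γ | γ - l ∈ T}`
  set A : Λ → Set Γ := fun l => (fun γ => γ - (l : Γ)) ⁻¹' T with hA
  have hAm : ∀ l, MeasurableSet (A l) := fun l => (measurable_sub_const _) hT
  have hAdisj : Pairwise (Function.onFun Disjoint A) := by
    intro k k' hkk'
    refine Set.disjoint_left.2 fun γ hk hk' => hkk' ?_
    obtain ⟨t, -, ht2⟩ := htrans γ
    have e1 : γ - (k : Γ) = t := ht2 _ ⟨hk, by rw [sub_sub_cancel]; exact k.2⟩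
    have e2 : γ - (k' : Γ) = t := ht2 _ ⟨hk', by rw [sub_sub_cancel]; exact k'.2⟩
    exact Subtype.ext (sub_right_injective (e1.trans e2.symm))
  have hAcover : (⋃ l, A l) = univ := by
    refine eq_univ_of_forall fun γ => ?_
    obtain ⟨t, ⟨htT, htΛ⟩, -⟩ := htrans γ
    refine mem_iUnion.2 ⟨⟨γ - t, htΛ⟩, ?_⟩
    show γ - (γ - t) ∈ T
    rwa [sub_sub_cancel]
  have hAsum : ∑' l : Λ, μ (A l) = μ univ := by
    rw [← measure_iUnion hAdisj hAm, hAcover]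
  have hmapA : ∀ (l m : Λ), (Measure.map (fun γ => γ - (l : Γ)) μ) (A m) = μ (A (m + l)) := by
    intro l m
    rw [Measure.map_apply (measurable_sub_const _) (hAm m)]
    congr 1
    ext γ
    simp only [hA, mem_preimage]
    have hsub : γ - (l : Γ) - (m : Γ) = γ - ((m : Γ) + (l : Γ)) := by
      rw [sub_sub, add_comm]
    rw [hsub, AddSubgroup.coe_add]
  haveI : SigmaFinite ρ := by
    refine Measure.sigmaFinite_of_countable (Set.countable_range A) ?_ (by
      rw [sUnion_range]; exact hAcover)
    rintro s ⟨m, rfl⟩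
    rw [hρ, Measure.sum_apply _ (hAm m)]
    calc ∑' l : Λ, (Measure.map (fun γ => γ - (l : Γ)) μ) (A m)
        = ∑' l : Λ, μ (A (m + l)) := by
          exact tsum_congr fun l => hmapA l m
      _ = ∑' k : Λ, μ (A k) := (Equiv.addLeft m).tsum_eq fun k => μ (A k)
      _ = μ univ := hAsum
      _ < ∞ := measure_lt_top μ _
  have hle : ∀ l : Λ, Measure.map (fun γ => γ - (l : Γ)) μ ≤ ρ := fun l =>
    hρ ▸ Measure.le_sum _ l
  have hμρ : μ ≪ ρ := by
    have h0 := hle 0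
    simp only [ZeroMemClass.coe_zero, sub_zero, Measure.map_id'] at h0
    exact h0.absolutelyContinuous
  -- measurable representative of `f`
  obtain ⟨f₀, hf₀sm, hff₀⟩ := hf.1
  set F : Γ → ℝ≥0∞ := fun γ => (‖f γ‖₊ : ℝ≥0∞) with hF
  set F₀ : Γ → ℝ≥0∞ := fun γ => (‖f₀ γ‖₊ : ℝ≥0∞) with hF₀
  have hF₀m : Measurable F₀ := hf₀sm.measurable.enorm
  have key : ∫⁻ γ, g γ * F₀ γ ∂ρ = ∫⁻ γ, F₀ γ ∂μ :=
    lintegral_rnDeriv_mul hμρ hF₀m.aemeasurable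
  have expand : ∫⁻ γ, g γ * F₀ γ ∂ρ
      = ∫⁻ γ, ∑' l : Λ, g (γ - (l : Γ)) * F₀ (γ - (l : Γ)) ∂μ := by
    rw [hρ, lintegral_sum_measure]
    have h1 : ∀ l : Λ, ∫⁻ γ, g γ * F₀ γ ∂(Measure.map (fun γ => γ - (l : Γ)) μ)
        = ∫⁻ γ, g (γ - (l : Γ)) * F₀ (γ - (l : Γ)) ∂μ := fun l =>
      lintegral_map (hgm.mul hF₀m) (measurable_sub_const _)
    rw [tsum_congr h1]
    exact (lintegral_tsum fun l =>
      ((hgm.mul hF₀m).comp (measurable_sub_const _)).aemeasurable).symm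
  -- a.e. equality of `g * F` and `g * F₀`
  obtain ⟨N', hNN', hN'm, hN'0⟩ :=
    exists_measurable_superset_of_null (ae_iff.mp hff₀ : μ {γ | f γ ≠ f₀ γ} = 0)
  have hgN' : ∀ᵐ γ ∂ρ, γ ∈ N' → g γ = 0 := by
    have h0 : ∫⁻ γ in N', g γ ∂ρ = 0 := by
      rw [Measure.setLIntegral_rnDeriv hμρ]
      exact hN'0
    exact (setLIntegral_eq_zero_iff hN'm hgm).mp h0
  have hρae : ∀ᵐ γ ∂ρ, g γ * F γ = g γ * F₀ γ := by
    filter_upwards [hgN'] with γ hγ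
    by_cases hmem : γ ∈ N'
    · rw [hγ hmem, zero_mul, zero_mul]
    · have : f γ = f₀ γ := by
        by_contra hne
        exact hmem (hNN' hne)
      simp only [hF, hF₀, this]
  obtain ⟨M', hMM', hM'm, hM'0⟩ :=
    exists_measurable_superset_of_null (ae_iff.mp hρae)
  have hml : ∀ l : Λ, ∀ᵐ γ ∂μ,
      g (γ - (l : Γ)) * F (γ - (l : Γ)) = g (γ - (l : Γ)) * F₀ (γ - (l : Γ)) := by
    intro l
    have h1 : μ ((fun γ => γ - (l : Γ)) ⁻¹' M') = 0 := by
      rw [← Measure.map_apply (measurable_sub_const _) hM'm]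
      exact le_antisymm (le_trans (Measure.le_iff'.mp (hle l) M') hM'0.le) zero_le
    rw [ae_iff]
    refine measure_mono_null (fun γ hγ => ?_) h1
    exact hMM' hγ
  have hall : ∀ᵐ γ ∂μ, ∀ l : Λ,
      g (γ - (l : Γ)) * F (γ - (l : Γ)) = g (γ - (l : Γ)) * F₀ (γ - (l : Γ)) :=
    (ae_all_iff).2 hml
  -- pointwise bound
  have hPfb : ∀ γ, (‖Pf γ‖₊ : ℝ≥0∞) ≤ ∑' l : Λ, g (γ - (l : Γ)) * F (γ - (l : Γ)) := by
    intro γ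
    have hstep : (‖Pf γ‖₊ : ℝ≥0∞) ≤ ∑' l : Λ, g (γ + (l : Γ)) * F (γ + (l : Γ)) := by
      rw [hPf]
      refine le_trans (stmt18_enn_nnnorm_tsum_le _) (ENNReal.tsum_le_tsum fun l => ?_)
      have hne : ‖e x (-(l : Γ))‖₊ = 1 :=
        NNReal.coe_injective (by simp [he_norm])
      have hnc : (‖(((g (γ + (l : Γ))).toReal : ℝ) : ℂ)‖₊ : ℝ≥0∞)
          = ((g (γ + (l : Γ))).toNNReal : ℝ≥0∞) := by
        rw [Complex.nnnorm_real, ← Real.toNNReal_eq_nnnorm_of_nonneg ENNReal.toReal_nonneg,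
          ENNReal.toNNReal_toReal_eq]
      calc (‖e x (-(l : Γ)) * (((g (γ + (l : Γ))).toReal : ℝ) : ℂ) * f (γ + (l : Γ))‖₊ : ℝ≥0∞)
          = (‖e x (-(l : Γ))‖₊ : ℝ≥0∞) * (‖(((g (γ + (l : Γ))).toReal : ℝ) : ℂ)‖₊ : ℝ≥0∞)
              * (‖f (γ + (l : Γ))‖₊ : ℝ≥0∞) := by
            rw [nnnorm_mul, nnnorm_mul]; push_cast; ring
        _ = ((g (γ + (l : Γ))).toNNReal : ℝ≥0∞) * F (γ + (l : Γ)) := by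
            rw [hne, hnc]; simp [hF]
        _ ≤ g (γ + (l : Γ)) * F (γ + (l : Γ)) :=
            mul_le_mul_left ENNReal.coe_toNNReal_le_self _
    refine hstep.trans_eq ?_
    have := (Equiv.neg Λ).tsum_eq fun l : Λ => g (γ + (l : Γ)) * F (γ + (l : Γ))
    rw [← this]
    exact tsum_congr fun l => by
      simp [sub_eq_add_neg]
  -- assemble
  rw [eLpNorm_one_eq_lintegral_enorm, eLpNorm_one_eq_lintegral_enorm]
  calc ∫⁻ γ, (‖Pf γ‖₊ : ℝ≥0∞) ∂μ
      ≤ ∫⁻ γ, ∑' l : Λ, g (γ - (l : Γ)) * F₀ (γ - (l : Γ)) ∂μ := by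
        refine lintegral_mono_ae ?_
        filter_upwards [hall] with γ hγ
        exact (hPfb γ).trans_eq (tsum_congr fun l => hγ l)
    _ = ∫⁻ γ, g γ * F₀ γ ∂ρ := expand.symm
    _ = ∫⁻ γ, F₀ γ ∂μ := key
    _ = ∫⁻ γ, (‖f γ‖₊ : ℝ≥0∞) ∂μ := by
        refine lintegral_congr_ae ?_
        filter_upwards [hff₀] with γ h
        simp [hF₀, h]
end
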